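/- Let α, γ be real numbers with α > 0 and γ > 0, and let β > 0 satisfy β(α+γ) < 4. For κ ≥ 0 let p*(κ) ∈ [0,1] denote a fixed point of p ↦ 1/(1 + exp(β·(α − κ − p(α+γ)))). If 0 ≤ κ₁ < κ₂ and p₁ = p*(κ₁), p₂ = p*(κ₂) are fixed points for the respective switching costs, then p₁ < p₂. That is, the equilibrium probability of the status-quo action is strictly increasing in the switching cost κ. -/

import Mathlib

/-!
Write the fixed-point equation as `p = σ(c + s p)` with `σ` the logistic sigmoid,
`s = β(α + γ) < 4` and `c = β(κ - α)`, which increases with `κ`. If the argument `c + s p`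
increases from `κ₁` to `κ₂`, so does `p`, since `σ` is strictly increasing. If it does not, the
slope bound `σ' = σ(1 - σ) ≤ 1/4` gives `4(p₁ - p₂) ≤ (c₁ - c₂) + s(p₁ - p₂)`, that is
`(4 - s)(p₁ - p₂) < 0`.
-/

open Real

lemma one_div_one_add_exp_eq_sigmoid (x : ℝ) : 1 / (1 + exp x) = sigmoid (-x) := by
  rw [sigmoid_def, neg_neg, one_div]

lemma sigmoid_mul_one_sub_sigmoid_le (x : ℝ) : sigmoid x * (1 - sigmoid x) ≤ 1 / 4 := by
  nlinarith [sq_nonneg (sigmoid x - 1 / 2)]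

lemma sigmoid_sub_sigmoid_le {a b : ℝ} (h : a ≤ b) : sigmoid b - sigmoid a ≤ (b - a) / 4 := by
  have hmono : Monotone fun x => x / 4 - sigmoid x := by
    have hderiv (x : ℝ) :
        HasDerivAt (fun x => x / 4 - sigmoid x) (1 / 4 - sigmoid x * (1 - sigmoid x)) x :=
      ((hasDerivAt_id x).div_const 4).sub (hasDerivAt_sigmoid x)
    refine monotone_of_deriv_nonneg (fun x => (hderiv x).differentiableAt) fun x => ?_
    rw [(hderiv x).deriv]
    linarith [sigmoid_mul_one_sub_sigmoid_le x]
  linarith [hmono h]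

theorem lt_of_sigmoid_add_mul_eq {s c₁ c₂ p₁ p₂ : ℝ} (hs : s < 4) (hc : c₁ < c₂)
    (h₁ : sigmoid (c₁ + s * p₁) = p₁) (h₂ : sigmoid (c₂ + s * p₂) = p₂) : p₁ < p₂ := by
  rcases lt_or_ge (c₁ + s * p₁) (c₂ + s * p₂) with hlt | hge
  · rw [← h₁, ← h₂]
    exact sigmoid_lt hlt
  · have hlip := sigmoid_sub_sigmoid_le hge
    rw [h₁, h₂] at hlip
    have hprod : (4 - s) * (p₁ - p₂) < 0 := by linarith
    linarith [neg_of_mul_neg_right hprod (by linarith)]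

theorem qre_sb_fixedPoint_strictMono_kappa_general
    (α γ β : ℝ) (hβ : 0 < β)
    (hcontr : β * (α + γ) < 4)
    (κ₁ κ₂ p₁ p₂ : ℝ) (hκ : κ₁ < κ₂)
    (hfix₁ : 1 / (1 + Real.exp (β * (α - κ₁ - p₁ * (α + γ)))) = p₁)
    (hfix₂ : 1 / (1 + Real.exp (β * (α - κ₂ - p₂ * (α + γ)))) = p₂) :
    p₁ < p₂ := by
  have hfix_sigmoid : ∀ κ p : ℝ, 1 / (1 + exp (β * (α - κ - p * (α + γ)))) =
      sigmoid (β * (κ - α) + β * (α + γ) * p) := fun κ p => by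
    rw [one_div_one_add_exp_eq_sigmoid]
    ring_nf
  rw [hfix_sigmoid] at hfix₁ hfix₂
  exact lt_of_sigmoid_add_mul_eq hcontr (by gcongr) hfix₁ hfix₂

/-- Comparative statics in the switching cost: under the contraction condition,
the equilibrium probability of the status quo is strictly increasing in `κ`. -/
theorem qre_sb_fixedPoint_strictMono_kappa
    (α γ β : ℝ) (hα : 0 < α) (hγ : 0 < γ) (hβ : 0 < β)
    (hcontr : β * (α + γ) < 4)
    (κ₁ κ₂ p₁ p₂ : ℝ) (hκ₁ : 0 ≤ κ₁) (hκ : κ₁ < κ₂)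
    (hp₁ : p₁ ∈ Set.Icc (0:ℝ) 1) (hp₂ : p₂ ∈ Set.Icc (0:ℝ) 1)
    (hfix₁ : 1 / (1 + Real.exp (β * (α - κ₁ - p₁ * (α + γ)))) = p₁)
    (hfix₂ : 1 / (1 + Real.exp (β * (α - κ₂ - p₂ * (α + γ)))) = p₂) :
    p₁ < p₂ :=
  qre_sb_fixedPoint_strictMono_kappa_general α γ β hβ hcontr κ₁ κ₂ p₁ p₂ hκ hfix₁ hfix₂
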